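/- arXiv:1602.03633 — 3 statements merged into one kernel-verified Lean document; each statement's English description precedes it below -/
import Mathlib

section
/- For β ∈ (0,α) with E[Z^β] < 1, any stationary probability measure ν_ε of the iteration s ↦ Z(1+s)/(1+ε²s) satisfies ∫ τ^β ν_ε(dτ) ≤ E[Z^β]/(1 − E[Z^β]), uniformly in ε > 0; consequently the tails satisfy G_{ν_ε}(x) ≤ (E[Z^β]/(1−E[Z^β])) x^{−β} for all x > 0 and the family {ν_ε}_{ε>0} is tight. -/
open MeasureTheory

lemma bddInt {ν : Measure ℝ} [IsFiniteMeasure ν] {f : ℝ → ℝ}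
    (hf : AEStronglyMeasurable f ν) (C : ℝ) (hC : ∀ᵐ x ∂ν, |f x| ≤ C) :
    Integrable f ν :=
  ⟨hf, HasFiniteIntegral.of_bounded (C := C) (by simpa [Real.norm_eq_abs] using hC)⟩

lemma rpow_add_le (a b β : ℝ) (ha : 0 ≤ a) (hb : 0 ≤ b) (h0 : 0 ≤ β) (h1 : β ≤ 1) :
    (a + b) ^ β ≤ a ^ β + b ^ β := by
  have h := NNReal.rpow_add_le_add_rpow (Real.toNNReal a) (Real.toNNReal b) h0 h1
  have h2 := NNReal.coe_le_coe.mpr h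
  simpa [NNReal.coe_rpow, Real.coe_toNNReal a ha, Real.coe_toNNReal b hb] using h2

lemma key (cm cp β : ℝ) (hcm : 0 < cm) (hcmcp : cm < cp)
    (hβ0 : 0 < β) (hβ1 : β < 1)
    (μ : Measure ℝ) [IsProbabilityMeasure μ] (hμ : μ (Set.Icc cm cp)ᶜ = 0)
    (hmom : ∫ z, z ^ β ∂μ < 1)
    (ε : ℝ) (hε : 0 < ε) (ν : Measure ℝ) (hpν : IsProbabilityMeasure ν)
    (hν : ν (Set.Iio 0) = 0)
    (hstat : ∀ f : ℝ → ℝ, Measurable f → (∃ C, ∀ x, |f x| ≤ C) →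
        ∫ x, f x ∂ν = ∫ s, ∫ t, f (t * (1 + s) / (1 + ε ^ 2 * s)) ∂μ ∂ν) :
    (∫⁻ τ, ENNReal.ofReal (τ ^ β) ∂ν
          ≤ ENNReal.ofReal ((∫ z, z ^ β ∂μ) / (1 - ∫ z, z ^ β ∂μ))) ∧
       ∀ x : ℝ, 0 < x →
        ν (Set.Ioi x) ≤ ENNReal.ofReal
          (((∫ z, z ^ β ∂μ) / (1 - ∫ z, z ^ β ∂μ)) * x ^ (-β)) := by
  set m := ∫ z, z ^ β ∂μ with hm
  have hcp : (0:ℝ) < cp := hcm.trans hcmcp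
  have hε2 : (0:ℝ) < ε ^ 2 := by positivity
  -- a.e. statements
  have haeμ : ∀ᵐ z ∂μ, z ∈ Set.Icc cm cp := by
    rw [ae_iff]
    simpa [Set.compl_def] using hμ
  have haeν0 : ∀ᵐ s ∂ν, 0 ≤ s := by
    rw [ae_iff]
    rw [show {a : ℝ | ¬ 0 ≤ a} = Set.Iio 0 by ext; simp]
    exact hν
  -- basic facts about m
  have hmnn : 0 ≤ m :=
    integral_nonneg_of_ae (haeμ.mono fun z hz =>
      Real.rpow_nonneg (hcm.le.trans hz.1) β)
  have h1m : (0:ℝ) < 1 - m := by linarith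
  -- bound M on the support
  set M := cp * (1 + (ε ^ 2)⁻¹) with hMdef
  have hMcp : cp ≤ M := by
    nlinarith [inv_pos.mpr hε2]
  have hM : 0 < M := hcp.trans_le hMcp
  have harg : ∀ s t : ℝ, 0 ≤ s → t ∈ Set.Icc cm cp →
      t * (1 + s) / (1 + ε ^ 2 * s) ∈ Set.Icc 0 M := by
    intro s t hs ht
    have hd : (0:ℝ) < 1 + ε ^ 2 * s := by nlinarith
    constructor
    · apply div_nonneg _ hd.le
      nlinarith [ht.1]
    · rw [div_le_iff₀ hd]
      have h1 : t * (1 + s) ≤ cp * (1 + s) :=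
        mul_le_mul_of_nonneg_right ht.2 (by linarith)
      have h2 : (0:ℝ) ≤ cp * (ε ^ 2 * s + (ε ^ 2)⁻¹) := by positivity
      have expand : M * (1 + ε ^ 2 * s)
          = cp * (1 + s) + cp * (ε ^ 2 * s + (ε ^ 2)⁻¹) := by
        rw [hMdef]; field_simp; ring
      linarith
  -- Step 1 : ν (Ioi M) = 0
  have hνM : ν (Set.Ioi M) = 0 := by
    have hmeas : Measurable ((Set.Ioi M).indicator (1 : ℝ → ℝ)) :=
      measurable_const.indicator measurableSet_Ioi
    have hbd : ∃ C, ∀ x, |(Set.Ioi M).indicator (1 : ℝ → ℝ) x| ≤ C := by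
      refine ⟨1, fun x => ?_⟩
      by_cases hx : x ∈ Set.Ioi M <;> simp [Set.indicator_apply, hx]
    have h := hstat _ hmeas hbd
    rw [integral_indicator_one measurableSet_Ioi] at h
    have hz : ∫ s, ∫ t, (Set.Ioi M).indicator (1 : ℝ → ℝ)
        (t * (1 + s) / (1 + ε ^ 2 * s)) ∂μ ∂ν = 0 := by
      apply integral_eq_zero_of_ae
      filter_upwards [haeν0] with s hs
      apply integral_eq_zero_of_ae
      filter_upwards [haeμ] with t ht
      have := (harg s t hs ht).2
      simp [Set.indicator_apply, not_lt.mpr this]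
    rw [hz] at h
    have hfin : ν (Set.Ioi M) ≠ ⊤ := (measure_lt_top ν _).ne
    exact (ENNReal.toReal_eq_zero_iff _).mp h |>.resolve_right hfin
  have haeνM : ∀ᵐ s ∂ν, s ∈ Set.Icc 0 M := by
    have h2 : ∀ᵐ s ∂ν, s ∉ Set.Ioi M := measure_eq_zero_iff_ae_notMem.mp hνM
    filter_upwards [haeν0, h2] with s h0 hM'
    exact ⟨h0, not_lt.mp (by simpa using hM')⟩
  -- the truncated test function
  set f : ℝ → ℝ := fun s => min ((max s 0) ^ β) (M ^ β) with hfdef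
  have hfmeas : Measurable f := by
    apply Measurable.min _ measurable_const
    exact (Real.continuous_rpow_const hβ0.le).measurable.comp
      (measurable_id.max measurable_const)
  have hfnn : ∀ x, 0 ≤ f x := fun x =>
    le_min (Real.rpow_nonneg (le_max_right _ _) β) (Real.rpow_nonneg hM.le β)
  have hfbd : ∀ x, |f x| ≤ M ^ β := fun x => by
    rw [abs_of_nonneg (hfnn x)]; exact min_le_right _ _
  have hfeq : ∀ x ∈ Set.Icc (0:ℝ) M, f x = x ^ β := by
    intro x hx
    rw [hfdef]
    simp only
    rw [max_eq_left hx.1, min_eq_left (Real.rpow_le_rpow hx.1 hx.2 hβ0.le)]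
  have hfint : Integrable f ν :=
    bddInt hfmeas.aestronglyMeasurable (M ^ β) (Filter.Eventually.of_forall hfbd)
  set A := ∫ s, f s ∂ν with hA
  have hAnn : 0 ≤ A := integral_nonneg hfnn
  -- pointwise bound on the inner integral
  have hinner : ∀ s : ℝ, s ∈ Set.Icc (0:ℝ) M →
      ∫ t, f (t * (1 + s) / (1 + ε ^ 2 * s)) ∂μ ≤ m * (1 + f s) := by
    intro s hs
    have hcompmeas : Measurable fun t : ℝ => f (t * (1 + s) / (1 + ε ^ 2 * s)) :=
      hfmeas.comp ((measurable_id.mul_const _).div_const _)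
    have hint1 : Integrable (fun t : ℝ => f (t * (1 + s) / (1 + ε ^ 2 * s))) μ :=
      bddInt hcompmeas.aestronglyMeasurable (M ^ β)
        (Filter.Eventually.of_forall fun t => hfbd _)
    have hint2 : Integrable (fun t : ℝ => t ^ β * (1 + f s)) μ := by
      refine bddInt ((Real.continuous_rpow_const hβ0.le).measurable.mul_const
        _).aestronglyMeasurable (cp ^ β * (1 + M ^ β)) ?_
      filter_upwards [haeμ] with t ht
      have h0t : 0 ≤ t := hcm.le.trans ht.1
      have h1 : t ^ β ≤ cp ^ β := Real.rpow_le_rpow h0t ht.2 hβ0.le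
      have h2 : 1 + f s ≤ 1 + M ^ β := by
        linarith [(abs_le.mp (hfbd s)).2]
      rw [abs_of_nonneg (mul_nonneg (Real.rpow_nonneg h0t β)
        (by linarith [hfnn s]))]
      exact mul_le_mul h1 h2 (by linarith [hfnn s]) (Real.rpow_nonneg hcp.le β)
    calc ∫ t, f (t * (1 + s) / (1 + ε ^ 2 * s)) ∂μ
        ≤ ∫ t, t ^ β * (1 + f s) ∂μ := by
          apply integral_mono_ae hint1 hint2
          filter_upwards [haeμ] with t ht
          have h0t : 0 ≤ t := hcm.le.trans ht.1
          have hargIcc := harg s t hs.1 ht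
          have hnum : 0 ≤ t * (1 + s) := by nlinarith [hs.1]
          have hden : (1:ℝ) ≤ 1 + ε ^ 2 * s := by nlinarith [hs.1]
          have hle : t * (1 + s) / (1 + ε ^ 2 * s) ≤ t * (1 + s) :=
            div_le_self hnum hden
          calc f (t * (1 + s) / (1 + ε ^ 2 * s))
              = (t * (1 + s) / (1 + ε ^ 2 * s)) ^ β := hfeq _ hargIcc
            _ ≤ (t * (1 + s)) ^ β := Real.rpow_le_rpow hargIcc.1 hle hβ0.le
            _ = t ^ β * (1 + s) ^ β := Real.mul_rpow h0t (by linarith [hs.1])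
            _ ≤ t ^ β * (1 + s ^ β) := by
                apply mul_le_mul_of_nonneg_left _ (Real.rpow_nonneg h0t β)
                calc (1 + s) ^ β ≤ 1 ^ β + s ^ β :=
                      rpow_add_le 1 s β zero_le_one hs.1 hβ0.le hβ1.le
                  _ = 1 + s ^ β := by rw [Real.one_rpow]
            _ = t ^ β * (1 + f s) := by rw [hfeq s hs]
      _ = m * (1 + f s) := by
          rw [integral_mul_const, ← hm, mul_comm]
  -- the key inequality A ≤ m (1 + A)
  have hkey : A ≤ m * (1 + A) := by
    have hpairmeas : Measurable fun p : ℝ × ℝ =>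
        f (p.2 * (1 + p.1) / (1 + ε ^ 2 * p.1)) := by
      apply hfmeas.comp
      exact (measurable_snd.mul (measurable_const.add measurable_fst)).div
        (measurable_const.add (measurable_const.mul measurable_fst))
    have hsm : StronglyMeasurable fun s : ℝ =>
        ∫ t, f (t * (1 + s) / (1 + ε ^ 2 * s)) ∂μ :=
      hpairmeas.stronglyMeasurable.integral_prod_right'
    have hintL : Integrable (fun s : ℝ =>
        ∫ t, f (t * (1 + s) / (1 + ε ^ 2 * s)) ∂μ) ν := by
      refine bddInt hsm.aestronglyMeasurable (M ^ β)
        (Filter.Eventually.of_forall fun s => ?_)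
      rw [← Real.norm_eq_abs]
      calc ‖∫ t, f (t * (1 + s) / (1 + ε ^ 2 * s)) ∂μ‖
          ≤ M ^ β * (μ Set.univ).toReal :=
            norm_integral_le_of_norm_le_const
              (Filter.Eventually.of_forall fun t => by
                rw [Real.norm_eq_abs]; exact hfbd _)
        _ = M ^ β := by simp
    have hintR : Integrable (fun s : ℝ => m * (1 + f s)) ν := by
      apply Integrable.const_mul
      exact (integrable_const (1:ℝ)).add hfint
    calc A = ∫ s, ∫ t, f (t * (1 + s) / (1 + ε ^ 2 * s)) ∂μ ∂ν :=
          hA.trans (hstat f hfmeas ⟨M ^ β, hfbd⟩)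
      _ ≤ ∫ s, m * (1 + f s) ∂ν := by
          apply integral_mono_ae hintL hintR
          filter_upwards [haeνM] with s hs
          exact hinner s hs
      _ = m * (1 + A) := by
          rw [integral_const_mul, integral_add (integrable_const 1) hfint]
          simp [hA]
  have hAbound : A ≤ m / (1 - m) := by
    rw [le_div_iff₀ h1m]; nlinarith
  -- lintegral identity
  have hlin : ∫⁻ τ, ENNReal.ofReal (τ ^ β) ∂ν = ENNReal.ofReal A := by
    have h1 : ∫⁻ τ, ENNReal.ofReal (τ ^ β) ∂ν = ∫⁻ τ, ENNReal.ofReal (f τ) ∂ν := by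
      apply lintegral_congr_ae
      filter_upwards [haeνM] with τ hτ
      rw [hfeq τ hτ]
    rw [h1, ← ofReal_integral_eq_lintegral_ofReal hfint
      (Filter.Eventually.of_forall hfnn)]
  constructor
  · rw [hlin]
    exact ENNReal.ofReal_le_ofReal hAbound
  · intro x hx
    have hxb : 0 < x ^ β := Real.rpow_pos_of_pos hx β
    have hmarkov : ENNReal.ofReal (x ^ β) * ν (Set.Ioi x)
        ≤ ENNReal.ofReal A := by
      rw [← hlin]
      calc ENNReal.ofReal (x ^ β) * ν (Set.Ioi x)
          = ∫⁻ τ in Set.Ioi x, ENNReal.ofReal (x ^ β) ∂ν := by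
            rw [setLIntegral_const, mul_comm]
        _ ≤ ∫⁻ τ in Set.Ioi x, ENNReal.ofReal (τ ^ β) ∂ν := by
            apply setLIntegral_mono (by fun_prop) fun τ hτ => ?_
            exact ENNReal.ofReal_le_ofReal
              (Real.rpow_le_rpow hx.le (le_of_lt hτ) hβ0.le)
        _ ≤ ∫⁻ τ, ENNReal.ofReal (τ ^ β) ∂ν := setLIntegral_le_lintegral _ _
    have h2 : ν (Set.Ioi x) ≤ ENNReal.ofReal A / ENNReal.ofReal (x ^ β) := by
      rw [ENNReal.le_div_iff_mul_le (Or.inl (by simp [hxb])) (Or.inl ENNReal.ofReal_ne_top)]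
      rwa [mul_comm]
    calc ν (Set.Ioi x) ≤ ENNReal.ofReal A / ENNReal.ofReal (x ^ β) := h2
      _ = ENNReal.ofReal (A / x ^ β) := (ENNReal.ofReal_div_of_pos hxb).symm
      _ ≤ ENNReal.ofReal (m / (1 - m) * x ^ (-β)) := by
          apply ENNReal.ofReal_le_ofReal
          rw [Real.rpow_neg hx.le, ← div_eq_mul_inv]
          gcongr

theorem stmt8 (cm cp β : ℝ) (hcm : 0 < cm) (hcmcp : cm < cp)
    (hβ : β ∈ Set.Ioo (0:ℝ) 1)
    (μ : Measure ℝ) [IsProbabilityMeasure μ] (hμ : μ (Set.Icc cm cp)ᶜ = 0)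
    (hmom : ∫ z, z ^ β ∂μ < 1) :
    (∀ ε : ℝ, 0 < ε → ∀ ν : Measure ℝ, IsProbabilityMeasure ν → ν (Set.Iio 0) = 0 →
      (∀ f : ℝ → ℝ, Measurable f → (∃ C, ∀ x, |f x| ≤ C) →
        ∫ x, f x ∂ν = ∫ s, ∫ t, f (t * (1 + s) / (1 + ε ^ 2 * s)) ∂μ ∂ν) →
      ((∫⁻ τ, ENNReal.ofReal (τ ^ β) ∂ν
          ≤ ENNReal.ofReal ((∫ z, z ^ β ∂μ) / (1 - ∫ z, z ^ β ∂μ))) ∧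
       ∀ x : ℝ, 0 < x →
        ν (Set.Ioi x) ≤ ENNReal.ofReal
          (((∫ z, z ^ β ∂μ) / (1 - ∫ z, z ^ β ∂μ)) * x ^ (-β)))) ∧
    (∀ δ : ℝ, 0 < δ → ∃ K : ℝ, 0 < K ∧
      ∀ ε : ℝ, 0 < ε → ∀ ν : Measure ℝ, IsProbabilityMeasure ν → ν (Set.Iio 0) = 0 →
      (∀ f : ℝ → ℝ, Measurable f → (∃ C, ∀ x, |f x| ≤ C) →
        ∫ x, f x ∂ν = ∫ s, ∫ t, f (t * (1 + s) / (1 + ε ^ 2 * s)) ∂μ ∂ν) →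
      ν (Set.Icc 0 K)ᶜ ≤ ENNReal.ofReal δ) := by
  obtain ⟨hβ0, hβ1⟩ := hβ
  constructor
  · intro ε hε ν hpν hν hstat
    exact key cm cp β hcm hcmcp hβ0 hβ1 μ hμ hmom ε hε ν hpν hν hstat
  · intro δ hδ
    set m := ∫ z, z ^ β ∂μ with hm
    have haeμ : ∀ᵐ z ∂μ, z ∈ Set.Icc cm cp := by
      rw [ae_iff]
      simpa [Set.compl_def] using hμ
    have hmnn : 0 ≤ m :=
      integral_nonneg_of_ae (haeμ.mono fun z hz =>
        Real.rpow_nonneg (hcm.le.trans hz.1) β)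
    have h1m : (0:ℝ) < 1 - m := by linarith
    set c := m / (1 - m) with hc
    have hcnn : 0 ≤ c := div_nonneg hmnn h1m.le
    set K := max 1 ((c / δ) ^ (1/β)) with hK
    have hK1 : (1:ℝ) ≤ K := le_max_left _ _
    have hK0 : (0:ℝ) < K := lt_of_lt_of_le one_pos hK1
    refine ⟨K, hK0, ?_⟩
    intro ε hε ν hpν hν hstat
    obtain ⟨-, htail⟩ := key cm cp β hcm hcmcp hβ0 hβ1 μ hμ hmom ε hε ν hpν hν hstat
    have hsub : (Set.Icc (0:ℝ) K)ᶜ ⊆ Set.Iio 0 ∪ Set.Ioi K := by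
      intro x hx
      simp only [Set.mem_compl_iff, Set.mem_Icc, not_and_or, not_le] at hx
      rcases hx with h | h
      · exact Or.inl h
      · exact Or.inr h
    have h1 : ν (Set.Icc 0 K)ᶜ ≤ ν (Set.Iio 0) + ν (Set.Ioi K) :=
      (measure_mono hsub).trans (measure_union_le _ _)
    rw [hν, zero_add] at h1
    have htK := htail K hK0
    rw [← hm, ← hc] at htK
    refine h1.trans (htK.trans (ENNReal.ofReal_le_ofReal ?_))
    have hKb : 0 < K ^ β := Real.rpow_pos_of_pos hK0 β
    have h2 : c / δ ≤ K ^ β := by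
      have h3 : (c / δ) ^ (1/β) ≤ K := le_max_right _ _
      have h4 : ((c / δ) ^ (1/β)) ^ β ≤ K ^ β :=
        Real.rpow_le_rpow (Real.rpow_nonneg (div_nonneg hcnn hδ.le) _) h3 hβ0.le
      rwa [← Real.rpow_mul (div_nonneg hcnn hδ.le), one_div,
        inv_mul_cancel₀ hβ0.ne', Real.rpow_one] at h4
    rw [Real.rpow_neg hK0.le, ← div_eq_mul_inv, div_le_iff₀ hKb]
    calc c = δ * (c / δ) := by field_simp
      _ ≤ δ * K ^ β := mul_le_mul_of_nonneg_left h2 hδ.le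
end

section
/- Let M(z) = ∫ t^z μ(dt) where μ is an absolutely continuous probability measure with C¹ density supported in [c₋,c₊] ⊂ (0,∞), satisfying E[Z] > 1 and E[log Z] < 0, and let α ∈ (0,1) be the unique positive real root of M(z)=1. Then there exists δ > 0 such that the only complex solution z of M(z) = 1 with Re z ∈ [α, α+δ] is z = α. -/
/-!
`M z = ∫ t ^ z μ(t) dt` is the Mellin transform of a density supported in a compact subset of
`(0, ∞)`, hence entire; since `M 1 = E[Z] > 1`, `M` is not constant, so the solutions of `M z = 1`
are isolated and a punctured disc of some radius `r` around `α` contains none. For `z = x + iy`,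
`Re (M x - M z) = ∫ t ^ x (1 - cos (y log t)) μ(t) dt ≥ c ∫ (1 - cos (y log t)) μ(t) dt`,
and the last integral is bounded below on `|y| ≥ r / 2`: it is continuous, positive for `y ≠ 0`
because `μ` is a density, and tends to `1` as `|y| → ∞` by the Riemann–Lebesgue lemma. As
`M x → M α = 1` when `x → α`, no solution with real part close to `α` has `|y| ≥ r / 2` either.
-/

open MeasureTheory Set Filter Topology Real Complex

section Mellin

variable {E : Type*} [NormedAddCommGroup E] [NormedSpace ℂ E]

theorem differentiable_mellin_of_support_subset_Icc {f : ℝ → E} {a b : ℝ} (ha : 0 < a)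
    (hf : IntegrableOn f (Icc a b)) (hsupp : Function.support f ⊆ Icc a b) :
    Differentiable ℂ (mellin f) := by
  have hzero : ∀ t, t ∉ Icc a b → f t = 0 := fun t ht =>
    Function.notMem_support.1 fun h => ht (hsupp h)
  have hloc : LocallyIntegrableOn f (Ioi 0) :=
    ((integrableOn_iff_integrable_of_support_subset hsupp).1 hf).locallyIntegrable
      |>.locallyIntegrableOn _
  intro s
  refine mellin_differentiableAt_of_isBigO_rpow (a := s.re + 1) (b := s.re - 1) hloc ?_
    (by linarith) ?_ (by linarith)
  · refine (Asymptotics.isBigO_zero _ _).congr' ?_ EventuallyEq.rfl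
    filter_upwards [eventually_gt_atTop b] with t ht
    exact (hzero t fun h => ht.not_ge h.2).symm
  · refine (Asymptotics.isBigO_zero _ _).congr' ?_ EventuallyEq.rfl
    filter_upwards [Ioo_mem_nhdsGT ha] with t ht
    exact (hzero t fun h => ht.2.not_ge h.1).symm

theorem tendsto_mellin_cocompact (f : ℝ → E) (σ : ℝ) :
    Tendsto (fun y : ℝ => mellin f (σ + y * I)) (cocompact ℝ) (𝓝 0) := by
  have hscale : Tendsto (fun y : ℝ => y / (2 * π)) (cocompact ℝ) (cocompact ℝ) :=
    (Homeomorph.mulRight₀ (2 * π)⁻¹ (by positivity)).isClosedEmbedding.tendsto_cocompact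
  simp only [mellin_eq_fourier, add_re, add_im, mul_re, mul_im, ofReal_re, ofReal_im, I_re, I_im,
    mul_zero, mul_one, sub_zero, zero_add, add_zero]
  exact (Real.zero_at_infty_fourier (fun u : ℝ => Real.exp (-σ * u) • f (Real.exp (-u)))).comp
    hscale

end Mellin

theorem exists_pos_le_of_tendsto_cocompact {X : Type*} [TopologicalSpace X] {f : X → ℝ}
    {S : Set X} (hS : IsClosed S) (hf : ContinuousOn f S) (hpos : ∀ x ∈ S, 0 < f x) {L : ℝ}
    (hL : 0 < L) (hlim : Tendsto f (cocompact X) (𝓝 L)) :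
    ∃ ε > 0, ∀ x ∈ S, ε ≤ f x := by
  obtain ⟨K, hK, hKc⟩ := mem_cocompact.1 (hlim.eventually (lt_mem_nhds (half_lt_self hL)))
  obtain ⟨ε, hε, hεK⟩ := (hK.inter_left hS).exists_forall_le' (hf.mono inter_subset_left)
    fun x hx => hpos x hx.1
  refine ⟨min ε (L / 2), lt_min hε (half_pos hL), fun x hx => ?_⟩
  by_cases hxK : x ∈ K
  · exact (min_le_left _ _).trans (hεK x ⟨hx, hxK⟩)
  · exact (min_le_right _ _).trans (hKc hxK).le

theorem exists_pos_le_rpow {a b : ℝ} (ha : 0 < a) {K : Set ℝ} (hK : IsCompact K) :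
    ∃ c > 0, ∀ t ∈ Icc a b, ∀ x ∈ K, c ≤ t ^ x := by
  have hcont : ContinuousOn (fun p : ℝ × ℝ => p.1 ^ p.2) (Icc a b ×ˢ K) := fun p hp =>
    (Real.continuousAt_rpow p (Or.inl (ha.trans_le hp.1.1).ne')).continuousWithinAt
  obtain ⟨c, hc, hcK⟩ := (isCompact_Icc.prod hK).exists_forall_le' hcont
    fun p hp => Real.rpow_pos_of_pos (ha.trans_le hp.1.1) _
  exact ⟨c, hc, fun t ht x hx => hcK (t, x) ⟨ht, hx⟩⟩

theorem Differentiable.eventually_ne_of_ne {E : Type*} [NormedAddCommGroup E] [NormedSpace ℂ E]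
    [CompleteSpace E] {f : ℂ → E} (hf : Differentiable ℂ f) {w : E}
    {z₁ : ℂ} (h : f z₁ ≠ w) (z₀ : ℂ) : ∀ᶠ z in 𝓝[≠] z₀, f z ≠ w := by
  refine not_frequently.1 fun hfreq => h ?_
  exact congrFun ((analyticOnNhd_univ_iff_differentiable.2 hf).eq_of_frequently_eq
    analyticOnNhd_const hfreq) z₁

section

variable {μ : ℝ → ℝ} {a b : ℝ}

theorem continuousOn_one_sub_cos_mul_log (ha : 0 < a) (y : ℝ) :
    ContinuousOn (fun t => 1 - Real.cos (y * Real.log t)) (Icc a b) :=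
  continuousOn_const.sub (Real.continuous_cos.comp_continuousOn
    (continuousOn_const.mul (Real.continuousOn_log.mono fun _ ht => (ha.trans_le ht.1).ne')))

theorem integral_one_sub_cos_mul_log_mul_pos (ha : 0 < a) (hμ : IntegrableOn μ (Icc a b))
    (hnn : ∀ t, 0 ≤ μ t) (hpos : 0 < ∫ t in Icc a b, μ t) {y : ℝ} (hy : y ≠ 0) :
    0 < ∫ t in Icc a b, (1 - Real.cos (y * Real.log t)) * μ t := by
  have hle : ∀ t, 0 ≤ (1 - Real.cos (y * Real.log t)) * μ t := fun t =>
    mul_nonneg (sub_nonneg.2 (Real.cos_le_one _)) (hnn t)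
  have hint := hμ.continuousOn_mul (continuousOn_one_sub_cos_mul_log ha y) isCompact_Icc
  have hμsupp := (setIntegral_pos_iff_support_of_nonneg_ae (ae_of_all _ hnn) hμ).1 hpos
  rw [setIntegral_pos_iff_support_of_nonneg_ae (ae_of_all _ hle) hint]
  -- `1 - cos (y * log t)` vanishes only on the lattice `t = exp (2πn / y)`, a null set.
  have hnull : volume (range fun n : ℤ => Real.exp (n * (2 * π) / y)) = 0 :=
    (countable_range _).measure_zero _
  refine hμsupp.trans_le ((measure_sdiff_null hnull).symm.trans_le (measure_mono ?_))
  rintro t ⟨⟨htμ, ht⟩, htZ⟩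
  refine ⟨mul_ne_zero (sub_ne_zero.2 fun hcos => htZ ?_) htμ, ht⟩
  obtain ⟨n, hn⟩ := (Real.cos_eq_one_iff _).1 hcos.symm
  refine ⟨n, ?_⟩
  dsimp only
  rw [hn, mul_div_cancel_left₀ _ hy, Real.exp_log (ha.trans_le ht.1)]

theorem integrableOn_cpow_mul (ha : 0 < a) (hμ : IntegrableOn μ (Icc a b)) (z : ℂ) :
    IntegrableOn (fun t : ℝ => (t : ℂ) ^ z * (μ t : ℂ)) (Icc a b) := by
  refine IntegrableOn.continuousOn_mul (fun t ht => ?_) hμ.ofReal isCompact_Icc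
  exact ((continuousAt_cpow_const (ofReal_mem_slitPlane.2 (ha.trans_le ht.1))).comp
    continuous_ofReal.continuousAt).continuousWithinAt

theorem re_ofReal_cpow_ofReal_add_mul_I {t : ℝ} (ht : 0 < t) (x y : ℝ) :
    ((t : ℂ) ^ ((x : ℂ) + y * I)).re = t ^ x * Real.cos (y * Real.log t) := by
  rw [cpow_def_of_ne_zero (ofReal_ne_zero.2 ht.ne'), ← ofReal_log ht.le, exp_re]
  simp [Real.rpow_def_of_pos ht, mul_comm]

noncomputable def complexMoment (μ : ℝ → ℝ) (a b : ℝ) (z : ℂ) : ℂ :=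
  ∫ t in Icc a b, (t : ℂ) ^ z * (μ t : ℂ)

namespace complexMoment

theorem eq_mellin (ha : 0 < a) (hsupp : Function.support μ ⊆ Icc a b) (z : ℂ) :
    complexMoment μ a b z = mellin (fun t => (μ t : ℂ)) (z + 1) := by
  rw [complexMoment, mellin]
  simp_rw [add_sub_cancel_right, smul_eq_mul]
  refine (setIntegral_eq_of_subset_of_forall_sdiff_eq_zero measurableSet_Ioi
    (fun t ht => ha.trans_le ht.1) fun t ht => ?_).symm
  rw [Function.notMem_support.1 fun h => ht.2 (hsupp h), ofReal_zero, mul_zero]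

theorem differentiable (ha : 0 < a) (hμ : IntegrableOn μ (Icc a b))
    (hsupp : Function.support μ ⊆ Icc a b) : Differentiable ℂ (complexMoment μ a b) := by
  have hsupp' : Function.support (fun t => (μ t : ℂ)) ⊆ Icc a b := by
    simpa only [Function.support, ne_eq, ofReal_eq_zero] using hsupp
  have hmellin := differentiable_mellin_of_support_subset_Icc ha (hμ.ofReal (𝕜 := ℂ)) hsupp'
  have hcomp : complexMoment μ a b = mellin (fun t => (μ t : ℂ)) ∘ (· + 1) :=
    funext (eq_mellin ha hsupp)
  rw [hcomp]
  exact hmellin.comp (differentiable_id.add_const 1)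

theorem ofReal_eq (ha : 0 < a) (x : ℝ) :
    complexMoment μ a b x = ((∫ t in Icc a b, t ^ x * μ t : ℝ) : ℂ) := by
  rw [complexMoment, ← integral_complex_ofReal]
  refine setIntegral_congr_fun measurableSet_Icc fun t ht => ?_
  rw [ofReal_mul, ofReal_cpow (ha.trans_le ht.1).le]

theorem re_sub (ha : 0 < a) (hμ : IntegrableOn μ (Icc a b)) (x y : ℝ) :
    (complexMoment μ a b x - complexMoment μ a b (x + y * I)).re
      = ∫ t in Icc a b, t ^ x * (1 - Real.cos (y * Real.log t)) * μ t := by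
  have hint (z : ℂ) := integrableOn_cpow_mul (b := b) ha hμ z
  rw [complexMoment, complexMoment, ← integral_sub (hint _) (hint _)]
  refine (integral_re ((hint _).sub (hint _))).symm.trans ?_
  refine setIntegral_congr_fun measurableSet_Icc fun t ht => ?_
  have ht0 := ha.trans_le ht.1
  have hx : ((t : ℂ) ^ (x : ℂ)).re = t ^ x := by
    simpa using re_ofReal_cpow_ofReal_add_mul_I ht0 x 0
  simp only [Pi.sub_apply, RCLike.re_to_complex, sub_re, re_mul_ofReal, hx,
    re_ofReal_cpow_ofReal_add_mul_I ht0]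
  ring

end complexMoment

theorem exists_pos_le_integral_one_sub_cos_mul_log_mul (ha : 0 < a)
    (hμ : IntegrableOn μ (Icc a b)) (hnn : ∀ t, 0 ≤ μ t) (hsupp : Function.support μ ⊆ Icc a b)
    (hpos : 0 < ∫ t in Icc a b, μ t) {r : ℝ} (hr : 0 < r) :
    ∃ ε > 0, ∀ y : ℝ, r ≤ |y| → ε ≤ ∫ t in Icc a b, (1 - Real.cos (y * Real.log t)) * μ t := by
  set M := complexMoment μ a b
  have hF : ∀ y : ℝ, (M 0 - M (y * I)).re
      = ∫ t in Icc a b, (1 - Real.cos (y * Real.log t)) * μ t := fun y => by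
    simpa using complexMoment.re_sub ha hμ 0 y
  have hcont : Continuous fun y : ℝ => (M 0 - M (y * I)).re := by
    have := (complexMoment.differentiable ha hμ hsupp).continuous
    fun_prop
  have hM0 : (M 0).re = ∫ t in Icc a b, μ t := by
    simpa using congrArg re (complexMoment.ofReal_eq (μ := μ) (b := b) ha 0)
  have hlim : Tendsto (fun y : ℝ => (M 0 - M (y * I)).re) (cocompact ℝ)
      (𝓝 (∫ t in Icc a b, μ t)) := by
    have hdecay : Tendsto (fun y : ℝ => M (y * I)) (cocompact ℝ) (𝓝 0) := by
      refine (tendsto_mellin_cocompact (fun t => (μ t : ℂ)) 1).congr fun y => ?_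
      rw [show M (y * I) = _ from complexMoment.eq_mellin ha hsupp _, ofReal_one, add_comm]
    have := (continuous_re.tendsto _).comp (hdecay.const_sub (M 0))
    rwa [sub_zero, hM0] at this
  obtain ⟨ε, hε, hεle⟩ := exists_pos_le_of_tendsto_cocompact
    (isClosed_le continuous_const continuous_abs) hcont.continuousOn
    (fun y hy => (hF y).symm ▸ integral_one_sub_cos_mul_log_mul_pos ha hμ hnn hpos
      (abs_pos.1 (hr.trans_le hy))) hpos hlim
  exact ⟨ε, hε, fun y hy => hF y ▸ hεle y hy⟩

theorem complexMoment.exists_pos_le_re_sub (ha : 0 < a) (hμ : IntegrableOn μ (Icc a b))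
    (hnn : ∀ t, 0 ≤ μ t) (hsupp : Function.support μ ⊆ Icc a b)
    (hpos : 0 < ∫ t in Icc a b, μ t) {K : Set ℝ} (hK : IsCompact K) {r : ℝ} (hr : 0 < r) :
    ∃ κ > 0, ∀ x ∈ K, ∀ y : ℝ, r ≤ |y| →
      κ ≤ (complexMoment μ a b x - complexMoment μ a b (x + y * I)).re := by
  obtain ⟨c, hc, hcle⟩ := exists_pos_le_rpow (b := b) ha hK
  obtain ⟨ε, hε, hεle⟩ := exists_pos_le_integral_one_sub_cos_mul_log_mul ha hμ hnn hsupp hpos hr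
  refine ⟨c * ε, mul_pos hc hε, fun x hx y hy => ?_⟩
  have hint := hμ.continuousOn_mul (continuousOn_one_sub_cos_mul_log ha y) isCompact_Icc
  have hint' : IntegrableOn (fun t => t ^ x * (1 - Real.cos (y * Real.log t)) * μ t) (Icc a b) :=
    hμ.continuousOn_mul ((continuousOn_id.rpow_const fun t ht => Or.inl (ha.trans_le ht.1).ne').mul
      (continuousOn_one_sub_cos_mul_log ha y)) isCompact_Icc
  rw [re_sub ha hμ]
  calc c * ε ≤ c * ∫ t in Icc a b, (1 - Real.cos (y * Real.log t)) * μ t :=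
        mul_le_mul_of_nonneg_left (hεle y hy) hc.le
    _ = ∫ t in Icc a b, c * ((1 - Real.cos (y * Real.log t)) * μ t) :=
        (integral_const_mul _ _).symm
    _ ≤ ∫ t in Icc a b, t ^ x * (1 - Real.cos (y * Real.log t)) * μ t := by
        refine setIntegral_mono_on (hint.const_mul c) hint' measurableSet_Icc fun t ht => ?_
        rw [mul_assoc]
        exact mul_le_mul_of_nonneg_right (hcle t ht x hx)
          (mul_nonneg (sub_nonneg.2 (Real.cos_le_one _)) (hnn t))

end

theorem stmt16_general (cm cp : ℝ) (hcm : 0 < cm)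
    (μ : ℝ → ℝ) (hμ : ContDiff ℝ 1 μ) (hsupp : Function.support μ ⊆ Set.Icc cm cp)
    (hnn : ∀ t, 0 ≤ μ t) (hprob : ∫ t in Set.Icc cm cp, μ t = 1)
    (hmean : 1 < ∫ t in Set.Icc cm cp, t * μ t)
    (α : ℝ)
    (hroot : ∫ t in Set.Icc cm cp, (t : ℂ) ^ (α : ℂ) * (μ t : ℂ) = 1) :
    ∃ δ > 0, ∀ u : ℂ, u.re ∈ Set.Icc α (α + δ) →
      (∫ t in Set.Icc cm cp, (t : ℂ) ^ u * (μ t : ℂ)) = 1 → u = (α : ℂ) := by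
  change complexMoment μ cm cp α = 1 at hroot
  have hμi : IntegrableOn μ (Icc cm cp) := hμ.continuous.integrableOn_Icc
  have hM := complexMoment.differentiable hcm hμi hsupp
  have hM1 : complexMoment μ cm cp (1 : ℝ) ≠ 1 := by
    rw [complexMoment.ofReal_eq hcm, Ne, ofReal_eq_one]
    simpa using hmean.ne'
  obtain ⟨r, hr, hiso⟩ := Metric.eventually_nhds_iff.1
    (eventually_nhdsWithin_iff.1 (hM.eventually_ne_of_ne hM1 α))
  obtain ⟨κ, hκ, hgap⟩ := complexMoment.exists_pos_le_re_sub hcm hμi hnn hsupp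
    (hprob ▸ one_pos) (isCompact_Icc (a := α) (b := α + 1)) (half_pos hr)
  obtain ⟨δ, hδ, hclose⟩ := Metric.continuousAt_iff.1
    ((hM.continuous.comp continuous_ofReal).continuousAt (x := α)) κ hκ
  obtain ⟨η, hη, hηδ, hη1, hηr⟩ : ∃ η > 0, η ≤ δ ∧ η ≤ 1 ∧ η ≤ r / 2 :=
    ⟨min δ (min 1 (r / 2)), by positivity, min_le_left _ _,
      (min_le_right _ _).trans (min_le_left _ _), (min_le_right _ _).trans (min_le_right _ _)⟩
  refine ⟨η / 2, half_pos hη, fun u hu hMu => by_contra fun hne => ?_⟩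
  change complexMoment μ cm cp u = 1 at hMu
  have hre : |u.re - α| < η := by rw [abs_of_nonneg (by linarith [hu.1])]; linarith [hu.2]
  rcases le_or_gt (r / 2) |u.im| with hy | hy
  · have hfar := hgap u.re ⟨hu.1, by linarith [hu.2]⟩ u.im hy
    have hnear := hclose (x := u.re) (by rw [Real.dist_eq]; linarith)
    rw [re_add_im, hMu] at hfar
    rw [Function.comp_apply, Function.comp_apply, hroot, dist_eq_norm] at hnear
    exact (hfar.trans (re_le_norm _)).not_gt hnear
  · refine hiso ?_ hne hMu
    calc dist u α ≤ |(u - α).re| + |(u - α).im| := by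
          rw [Complex.dist_eq]; exact norm_le_abs_re_add_abs_im _
      _ < r := by
        rw [sub_re, sub_im, ofReal_re, ofReal_im, sub_zero]
        linarith

theorem stmt16 (cm cp : ℝ) (hcm : 0 < cm) (hcmcp : cm < cp)
    (μ : ℝ → ℝ) (hμ : ContDiff ℝ 1 μ) (hsupp : Function.support μ ⊆ Set.Icc cm cp)
    (hnn : ∀ t, 0 ≤ μ t) (hprob : ∫ t in Set.Icc cm cp, μ t = 1)
    (hmean : 1 < ∫ t in Set.Icc cm cp, t * μ t)
    (hlog : ∫ t in Set.Icc cm cp, Real.log t * μ t < 0)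
    (α : ℝ) (hα : α ∈ Set.Ioo (0:ℝ) 1)
    (hroot : ∫ t in Set.Icc cm cp, (t : ℂ) ^ (α : ℂ) * (μ t : ℂ) = 1) :
    ∃ δ > 0, ∀ u : ℂ, u.re ∈ Set.Icc α (α + δ) →
      (∫ t in Set.Icc cm cp, (t : ℂ) ^ u * (μ t : ℂ)) = 1 → u = (α : ℂ) :=
  stmt16_general cm cp hcm μ hμ hsupp hnn hprob hmean α hroot
end

section
/- Let ξ be a probability measure supported in [1,∞) satisfying the stationarity relation ∫ f dξ = ∫∫ f(1+tz) μ(dz) ξ(dt) for all integrable f, where μ is a probability measure with E[Z^u] > 1 for u > α. If X(u) := ∫ t^u ξ(dt) were finite for some real u > α, then X(u) ≥ M(u) X(u) with M(u) = ∫ z^u μ(dz) > 1, a contradiction; hence ∫ t^u ξ(dt) = ∞ for all real u > α. -/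
/-!
Stationarity says that `ξ` is the law of `1 + T Z` with `T ∼ ξ` and `Z ∼ μ` independent, so
for `u > 0` the moment `X(u) = ∫ t ^ u dξ ∈ [1, ∞]` satisfies
`X(u) = E (1 + T Z) ^ u ≥ E T ^ u · E Z ^ u = X(u) M(u)`.
Working in `ℝ≥0∞` throughout, `M(u) > 1` for `u > α` then forces `X(u) = ∞`.
-/

open MeasureTheory
open scoped ENNReal

theorem Real.mul_rpow_le_one_add_mul_rpow {t z u : ℝ} (ht : 0 ≤ t) (hz : 0 ≤ z) (hu : 0 ≤ u) :
    t ^ u * z ^ u ≤ (1 + t * z) ^ u := by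
  rw [← Real.mul_rpow ht hz]
  exact Real.rpow_le_rpow (mul_nonneg ht hz) (by linarith [mul_nonneg ht hz]) hu

theorem ENNReal.eq_top_of_mul_le_self {a b : ℝ≥0∞} (ha : a ≠ 0) (hb : 1 < b) (h : a * b ≤ a) :
    a = ∞ := by
  by_contra ha_top
  exact hb.not_ge <| (ENNReal.mul_le_mul_iff_right ha ha_top).1 (by rwa [mul_one])

theorem one_lt_lintegral_ofReal_of_one_lt_integral {α : Type*} [MeasurableSpace α]
    {μ : Measure α} {f : α → ℝ} (hf : 0 ≤ᵐ[μ] f) (h : 1 < ∫ x, f x ∂μ) :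
    1 < ∫⁻ x, ENNReal.ofReal (f x) ∂μ := by
  rw [← ofReal_integral_eq_lintegral_ofReal (.of_integral_ne_zero (by linarith)) hf]
  exact ENNReal.one_lt_ofReal.2 h

section Stationary

variable {α β : Type*} [MeasurableSpace α] [MeasurableSpace β]
  {ξ : Measure α} [IsFiniteMeasure ξ] {μ : Measure β} [IsFiniteMeasure μ]
  {φ : α → β → α}

theorem eq_map_prod_of_integral_eq (hφ : Measurable (Function.uncurry φ))
    (hstat : ∀ f : α → ℝ, Measurable f → (∃ C, ∀ x, |f x| ≤ C) →
      ∫ t, f t ∂ξ = ∫ t, ∫ z, f (φ t z) ∂μ ∂ξ) :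
    ξ = (ξ.prod μ).map (Function.uncurry φ) := by
  ext s hs
  have hind : Measurable (s.indicator (1 : α → ℝ)) := measurable_one.indicator hs
  have hbdd : ∀ x, |s.indicator (1 : α → ℝ) x| ≤ 1 := fun x => by
    by_cases hx : x ∈ s <;> simp [hx]
  have hint : Integrable (fun p => s.indicator (1 : α → ℝ) (Function.uncurry φ p)) (ξ.prod μ) :=
    (integrable_const (1 : ℝ)).mono' (hind.comp hφ).aestronglyMeasurable
      (.of_forall fun p => hbdd _)
  have hreal : ξ.real s = ((ξ.prod μ).map (Function.uncurry φ)).real s := by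
    rw [← integral_indicator_one hs, hstat _ hind ⟨1, hbdd⟩, ← integral_indicator_one hs,
      integral_map hφ.aemeasurable hind.aestronglyMeasurable]
    exact (integral_prod _ hint).symm
  exact (measureReal_eq_measureReal_iff).1 hreal

theorem lintegral_eq_lintegral_lintegral_of_integral_eq (hφ : Measurable (Function.uncurry φ))
    (hstat : ∀ f : α → ℝ, Measurable f → (∃ C, ∀ x, |f x| ≤ C) →
      ∫ t, f t ∂ξ = ∫ t, ∫ z, f (φ t z) ∂μ ∂ξ)
    {F : α → ℝ≥0∞} (hF : Measurable F) :
    ∫⁻ t, F t ∂ξ = ∫⁻ t, ∫⁻ z, F (φ t z) ∂μ ∂ξ := by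
  conv_lhs => rw [eq_map_prod_of_integral_eq hφ hstat, lintegral_map hF hφ]
  exact lintegral_prod _ (hF.comp hφ).aemeasurable

end Stationary

theorem stmt17_general (cm cp α : ℝ) (hcm : 0 < cm)
    (hα : α ∈ Set.Ioo (0:ℝ) 1)
    (μ : Measure ℝ) [IsProbabilityMeasure μ] (hμ : μ (Set.Icc cm cp)ᶜ = 0)
    (hM : ∀ u : ℝ, α < u → 1 < ∫ z, z ^ u ∂μ)
    (ξ : Measure ℝ) [IsProbabilityMeasure ξ] (hξ : ξ (Set.Iio 1) = 0)
    (hstat : ∀ f : ℝ → ℝ, Measurable f → (∃ C, ∀ x, |f x| ≤ C) →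
      ∫ t, f t ∂ξ = ∫ t, ∫ z, f (1 + t * z) ∂μ ∂ξ) :
    ∀ u : ℝ, α < u → ∫⁻ t, ENNReal.ofReal (t ^ u) ∂ξ = ⊤ := by
  intro u hu
  have hu0 : 0 ≤ u := (hα.1.trans hu).le
  have hξ1 : ∀ᵐ t ∂ξ, 1 ≤ t := measure_eq_zero_iff_ae_notMem.1 hξ |>.mono fun t ht => not_lt.1 ht
  have hμ0 : ∀ᵐ z ∂μ, 0 ≤ z := measure_eq_zero_iff_ae_notMem.1 hμ |>.mono fun z hz =>
    hcm.le.trans (not_not.1 hz).1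
  have hpow : Measurable fun t : ℝ => ENNReal.ofReal (t ^ u) := by fun_prop
  have hL0 : ∫⁻ t, ENNReal.ofReal (t ^ u) ∂ξ ≠ 0 := by
    refine (zero_lt_one.trans_le ?_).ne'
    calc (1 : ℝ≥0∞) = ∫⁻ _, 1 ∂ξ := by simp
      _ ≤ _ := lintegral_mono_ae <| hξ1.mono fun t ht =>
        ENNReal.one_le_ofReal.2 (Real.one_le_rpow ht hu0)
  have hM1 : 1 < ∫⁻ z, ENNReal.ofReal (z ^ u) ∂μ :=
    one_lt_lintegral_ofReal_of_one_lt_integral (hμ0.mono fun z hz => Real.rpow_nonneg hz u)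
      (hM u hu)
  refine ENNReal.eq_top_of_mul_le_self hL0 hM1 ?_
  calc (∫⁻ t, ENNReal.ofReal (t ^ u) ∂ξ) * ∫⁻ z, ENNReal.ofReal (z ^ u) ∂μ
      = ∫⁻ t, ∫⁻ z, ENNReal.ofReal (t ^ u) * ENNReal.ofReal (z ^ u) ∂μ ∂ξ :=
        (lintegral_lintegral_mul hpow.aemeasurable hpow.aemeasurable).symm
    _ ≤ ∫⁻ t, ∫⁻ z, ENNReal.ofReal ((1 + t * z) ^ u) ∂μ ∂ξ := by
        refine lintegral_mono_ae (hξ1.mono fun t ht => lintegral_mono_ae (hμ0.mono fun z hz => ?_))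
        have ht0 : 0 ≤ t := zero_le_one.trans ht
        rw [← ENNReal.ofReal_mul (Real.rpow_nonneg ht0 u)]
        exact ENNReal.ofReal_le_ofReal (Real.mul_rpow_le_one_add_mul_rpow ht0 hz hu0)
    _ = ∫⁻ t, ENNReal.ofReal (t ^ u) ∂ξ :=
        (lintegral_eq_lintegral_lintegral_of_integral_eq (by fun_prop) hstat hpow).symm

theorem stmt17 (cm cp α : ℝ) (hcm : 0 < cm) (hcmcp : cm ≤ cp)
    (hα : α ∈ Set.Ioo (0:ℝ) 1)
    (μ : Measure ℝ) [IsProbabilityMeasure μ] (hμ : μ (Set.Icc cm cp)ᶜ = 0)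
    (hMα : ∫ z, z ^ α ∂μ = 1) (hM : ∀ u : ℝ, α < u → 1 < ∫ z, z ^ u ∂μ)
    (ξ : Measure ℝ) [IsProbabilityMeasure ξ] (hξ : ξ (Set.Iio 1) = 0)
    (hstat : ∀ f : ℝ → ℝ, Measurable f → (∃ C, ∀ x, |f x| ≤ C) →
      ∫ t, f t ∂ξ = ∫ t, ∫ z, f (1 + t * z) ∂μ ∂ξ) :
    ∀ u : ℝ, α < u → ∫⁻ t, ENNReal.ofReal (t ^ u) ∂ξ = ⊤ :=
  stmt17_general cm cp α hcm hα μ hμ hM ξ hξ hstat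
end
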